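/- Let p ≥ 3 be a prime number and G a group of order p^5 generated by elements f1, f2, f3, f4, f5 satisfying: (i) f4^p = f5^p = 1 and f5 ∈ Z(G); (ii) [f2,f1] = f3, [f3,f1] = f4, [f4,f1] = [f3,f2] = f5, [f4,f2] = [f4,f3] = 1; (iii) the subgroup ⟨f4, f5⟩ is isomorphic to C_p × C_p, and the quotient G/⟨f4, f5⟩ is a non-abelian group of order p^3 and exponent p. Then B_0(G) ≠ 0. -/

import Mathlib

/-- The coefficient group `ℚ/ℤ`. -/
abbrev QZ : Type := ℚ ⧸ AddSubgroup.zmultiples (1 : ℚ)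

/-- A (inhomogeneous) 2-cocycle on `G` with values in `ℚ/ℤ` (trivial action). -/
def IsGrpCocycle {G : Type*} [Group G] (f : G → G → QZ) : Prop :=
  ∀ g h k : G, f g h + f (g * h) k = f h k + f g (h * k)

/-- A 2-coboundary on `G` with values in `ℚ/ℤ` (trivial action). -/
def IsGrpCoboundary {G : Type*} [Group G] (f : G → G → QZ) : Prop :=
  ∃ c : G → QZ, ∀ g h : G, f g h = c g + c h - c (g * h)

/-- The additive group of 2-cocycles. -/
def cocycles2 (G : Type*) [Group G] : AddSubgroup (G → G → QZ) where
  carrier := {f | IsGrpCocycle f}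
  zero_mem' := by intro g h k; simp
  add_mem' := by
    intro a b ha hb g h k
    simp only [Pi.add_apply]
    rw [add_add_add_comm, ha g h k, hb g h k, add_add_add_comm]
  neg_mem' := by
    intro a ha g h k
    simp only [Pi.neg_apply, ← neg_add]
    rw [ha g h k]

/-- The subgroup of 2-coboundaries inside the group of 2-cocycles. -/
def coboundaries2 (G : Type*) [Group G] : AddSubgroup (cocycles2 G) where
  carrier := {f | IsGrpCoboundary (f : G → G → QZ)}
  zero_mem' := ⟨0, by intro g h; simp⟩
  add_mem' := by
    rintro a b ⟨c, hc⟩ ⟨d, hd⟩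
    refine ⟨c + d, fun g h => ?_⟩
    have : ((a + b : cocycles2 G) : G → G → QZ) g h
        = (a : G → G → QZ) g h + (b : G → G → QZ) g h := rfl
    rw [this, hc g h, hd g h]
    simp only [Pi.add_apply]
    abel
  neg_mem' := by
    rintro a ⟨c, hc⟩
    refine ⟨-c, fun g h => ?_⟩
    have : ((-a : cocycles2 G) : G → G → QZ) g h = -((a : G → G → QZ) g h) := rfl
    rw [this, hc g h]
    simp only [Pi.neg_apply]
    abel

/-- The second cohomology group `H²(G, ℚ/ℤ)` (trivial action), as cocycles mod coboundaries. -/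
abbrev H2 (G : Type*) [Group G] : Type _ := cocycles2 G ⧸ coboundaries2 G

/-- A group is bicyclic if it is cyclic or the direct product of two cyclic groups. -/
def IsBicyclic (A : Type*) [Group A] : Prop :=
  IsCyclic A ∨ ∃ B C : Subgroup A, IsCyclic B ∧ IsCyclic C ∧ Nonempty (A ≃* B × C)

/-- The restriction of `f` to every bicyclic subgroup is a coboundary. -/
def RestrictsToCoboundaries {G : Type*} [Group G] (f : G → G → QZ) : Prop :=
  ∀ A : Subgroup G, IsBicyclic A → IsGrpCoboundary (fun a b : A => f a b)

/-- The Bogomolov multiplier `B₀(G)`: the subgroup of `H²(G, ℚ/ℤ)` consisting of the classes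
whose restriction to every bicyclic subgroup of `G` vanishes. -/
def B0 (G : Type*) [Group G] : AddSubgroup (H2 G) where
  carrier := {x | ∃ f : cocycles2 G,
    (QuotientAddGroup.mk f : H2 G) = x ∧ RestrictsToCoboundaries (f : G → G → QZ)}
  zero_mem' := by
    refine ⟨0, rfl, fun A _ => ⟨0, fun a b => ?_⟩⟩
    simp
  add_mem' := by
    rintro x y ⟨f, rfl, hf⟩ ⟨g, rfl, hg⟩
    refine ⟨f + g, rfl, fun A hA => ?_⟩
    obtain ⟨c, hc⟩ := hf A hA
    obtain ⟨d, hd⟩ := hg A hA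
    refine ⟨c + d, fun a b => ?_⟩
    have hc' : (f : G → G → QZ) (a : G) (b : G) = c a + c b - c (a * b) := hc a b
    have hd' : (g : G → G → QZ) (a : G) (b : G) = d a + d b - d (a * b) := hd a b
    show ((f + g : cocycles2 G) : G → G → QZ) (a : G) (b : G)
        = (c + d) a + (c + d) b - (c + d) (a * b)
    have : ((f + g : cocycles2 G) : G → G → QZ) (a : G) (b : G)
        = (f : G → G → QZ) (a : G) (b : G) + (g : G → G → QZ) (a : G) (b : G) := rfl
    rw [this, hc', hd']
    simp only [Pi.add_apply]
    abel
  neg_mem' := by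
    rintro x ⟨f, rfl, hf⟩
    refine ⟨-f, rfl, fun A hA => ?_⟩
    obtain ⟨c, hc⟩ := hf A hA
    refine ⟨-c, fun a b => ?_⟩
    have hc' : (f : G → G → QZ) (a : G) (b : G) = c a + c b - c (a * b) := hc a b
    show ((-f : cocycles2 G) : G → G → QZ) (a : G) (b : G)
        = (-c) a + (-c) b - (-c) (a * b)
    have : ((-f : cocycles2 G) : G → G → QZ) (a : G) (b : G)
        = -((f : G → G → QZ) (a : G) (b : G)) := rfl
    rw [this, hc']
    simp only [Pi.neg_apply]
    abel

/-- The commutator `[g,h] = g⁻¹h⁻¹gh`. -/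
def cmt {G : Type*} [Group G] (g h : G) : G := g⁻¹ * h⁻¹ * g * h

/-!
Modulo `N = ⟨f4, f5⟩` the group `G` is the Heisenberg group of order `p³`, which gives coordinates
`θ : G →* Heis p`. Pull back along `θ` the cocycle of a central extension of `Heis p` in which
`x₂` and `x₃` stop commuting. On commuting elements of `G` the pulled-back cocycle is symmetric:
either both have trivial `f1`-coordinate, and then commuting forces the exponents of
`f5 = [f3, f2]` to agree, or one of them, `g`, has not, and then the other is a power of `g` modulo
`N`, because no nontrivial power of `f4 = [f3, f1]` is central. Symmetric cocycles on abelian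
groups are coboundaries, since `ℚ/ℤ` is injective; so the class lies in `B₀(G)`. It is not trivial:
on a coboundary `cmtForm` only depends on the commutator, but `[f3, f2] = f5 = [f4, f1]` while the
cocycle takes different values on the two pairs.
-/

noncomputable instance : DivisibleBy QZ ℤ :=
  letI : DivisibleBy ℚ ℕ := AddGroup.divisibleByNatOfDivisibleByInt ℚ
  AddGroup.divisibleByIntOfDivisibleByNat QZ

lemma IsBicyclic.commute {A : Type*} [Group A] (hA : IsBicyclic A) (x y : A) : Commute x y := by
  rcases hA with hA | ⟨B, C, hB, hC, ⟨e⟩⟩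
  · let _ := IsCyclic.commGroup (α := A)
    exact mul_comm x y
  · let _ := IsCyclic.commGroup (α := B)
    let _ := IsCyclic.commGroup (α := C)
    exact e.injective <| by rw [map_mul, map_mul, mul_comm]

section Cocycle

variable {G H : Type*} [Group G] [Group H] {f : G → G → QZ}

lemma IsGrpCocycle.comp (hf : IsGrpCocycle f) (θ : H →* G) :
    IsGrpCocycle (fun a b => f (θ a) (θ b)) := by
  intro a b c
  simpa only [map_mul] using hf (θ a) (θ b) (θ c)

lemma IsGrpCocycle.apply_one_left (hf : IsGrpCocycle f) (g : G) : f 1 g = f 1 1 := by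
  simpa using (hf 1 1 g).symm

lemma IsGrpCocycle.apply_one_right (hf : IsGrpCocycle f) (g : G) : f g 1 = f 1 1 := by
  simpa using hf g 1 1

lemma IsGrpCocycle.apply_pow_comm (hf : IsGrpCocycle f) (g : G) (n : ℕ) :
    f g (g ^ n) = f (g ^ n) g := by
  induction n with
  | zero => rw [pow_zero, hf.apply_one_left, hf.apply_one_right]
  | succ n ih =>
    have h := hf g (g ^ n) g
    rw [ih, add_left_cancel_iff, ← pow_succ', ← pow_succ] at h
    exact h.symm

abbrev IsGrpCocycle.extAddCommGroup {A : Type*} [Group A] {f : A → A → QZ} (hf : IsGrpCocycle f)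
    (hcomm : ∀ a b : A, Commute a b) (hsymm : ∀ a b, f a b = f b a) : AddCommGroup (A × QZ) :=
  let _ : Add (A × QZ) := ⟨fun x y => (x.1 * y.1, x.2 + y.2 + f x.1 y.1)⟩
  let _ : Zero (A × QZ) := ⟨(1, -f 1 1)⟩
  let _ : Neg (A × QZ) := ⟨fun x => (x.1⁻¹, -f 1 1 - x.2 - f x.1 x.1⁻¹)⟩
  { AddGroup.ofLeftAxioms
      (fun x y z => Prod.ext (mul_assoc _ _ _) <| by
        change x.2 + y.2 + f x.1 y.1 + z.2 + f (x.1 * y.1) z.1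
          = x.2 + (y.2 + z.2 + f y.1 z.1) + f x.1 (y.1 * z.1)
        linear_combination (norm := abel) hf x.1 y.1 z.1)
      (fun x => Prod.ext (one_mul _) <| by
        change -f 1 1 + x.2 + f 1 x.1 = x.2
        rw [hf.apply_one_left x.1]; abel)
      (fun x => Prod.ext (inv_mul_cancel _) <| by
        change -f 1 1 - x.2 - f x.1 x.1⁻¹ + x.2 + f x.1⁻¹ x.1 = -f 1 1
        rw [hsymm x.1⁻¹]; abel) with
    add_comm := fun x y => Prod.ext (hcomm _ _).eq <| by
      change x.2 + y.2 + f x.1 y.1 = y.2 + x.2 + f y.1 x.1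
      rw [hsymm x.1]; abel }

/-- Symmetric cocycles on commutative groups come from abelian extensions, which split because
`ℚ/ℤ` is an injective `ℤ`-module. -/
lemma IsGrpCocycle.isGrpCoboundary_of_symm {A : Type*} [Group A] {f : A → A → QZ}
    (hf : IsGrpCocycle f) (hcomm : ∀ a b : A, Commute a b) (hsymm : ∀ a b, f a b = f b a) :
    IsGrpCoboundary f := by
  let _ := hf.extAddCommGroup hcomm hsymm
  let j : QZ →+ A × QZ := AddMonoidHom.mk' (fun q => (1, q - f 1 1)) fun q q' =>
    Prod.ext (one_mul 1).symm (show q + q' - f 1 1 = q - f 1 1 + (q' - f 1 1) + f 1 1 by abel)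
  have hj : Function.Injective j := fun q q' h => sub_left_inj.mp (congrArg Prod.snd h)
  obtain ⟨r, hr⟩ :=
    (Module.Baer.of_divisible QZ).extension_property_addMonoidHom j hj (AddMonoidHom.id QZ)
  refine ⟨fun a => r (a, 0), fun g h => ?_⟩
  have hsplit : ((g, 0) + (h, 0) : A × QZ) = (g * h, 0) + j (f g h) :=
    Prod.ext (mul_one _).symm <| by
      change 0 + 0 + f g h = 0 + (f g h - f 1 1) + f (g * h) 1
      rw [hf.apply_one_right (g * h)]; abel
  have := congrArg r hsplit
  rw [map_add, map_add, ← AddMonoidHom.comp_apply r j, hr, AddMonoidHom.id_apply] at this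
  rw [this]; abel

lemma restrictsToCoboundaries_of_symm (hf : IsGrpCocycle f)
    (hsymm : ∀ g h, Commute g h → f g h = f h g) : RestrictsToCoboundaries f := fun A hA =>
  (hf.comp A.subtype).isGrpCoboundary_of_symm hA.commute fun a b =>
    hsymm a b ((hA.commute a b).map A.subtype)

lemma B0_ne_bot_of_not_isGrpCoboundary (hf : IsGrpCocycle f) (hres : RestrictsToCoboundaries f)
    (hnot : ¬ IsGrpCoboundary f) : B0 G ≠ ⊥ := by
  intro hbot
  have hmem : (QuotientAddGroup.mk (⟨f, hf⟩ : cocycles2 G) : H2 G) ∈ B0 G := ⟨⟨f, hf⟩, rfl, hres⟩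
  rw [hbot, AddSubgroup.mem_bot, QuotientAddGroup.eq_zero_iff] at hmem
  exact hnot hmem

-- For `f = δc` this is `c (cmt x y)`, because `y * x * cmt x y = x * y`.
def cmtForm (f : G → G → QZ) (x y : G) : QZ := f y x - f x y + f (y * x) (cmt x y)

lemma IsGrpCoboundary.cmtForm_eq_of_cmt_eq (hf : IsGrpCoboundary f) {x y x' y' : G}
    (h : cmt x y = cmt x' y') : cmtForm f x y = cmtForm f x' y' := by
  obtain ⟨c, hc⟩ := hf
  have key : ∀ x y : G, cmtForm f x y = c (cmt x y) := fun x y => by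
    have hxy : y * x * cmt x y = x * y := by simp only [cmt]; group
    simp only [cmtForm, hc, hxy]; abel
  rw [key, key, h]

end Cocycle

section Commutation

variable {G : Type*} [Group G] {x y z : G}

lemma mul_eq_mul_mul_of_cmt_eq (h : cmt x y = z) : x * y = y * x * z := by
  rw [← h, cmt]; group

lemma pow_mul_pow_eq_of_mul_eq (hyx : y * x = x * y * z) (hzx : Commute z x) (hzy : Commute z y)
    (m n : ℕ) : y ^ m * x ^ n = x ^ n * y ^ m * z ^ (n * m) := by
  have hconj : ∀ n : ℕ, SemiconjBy (x ^ n) (y * z ^ n) y := fun n => by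
    induction n with
    | zero => simp [SemiconjBy]
    | succ n ih =>
      refine pow_succ x n ▸ ih.mul_left ?_
      rw [SemiconjBy, pow_succ', ← mul_assoc, ← mul_assoc, ← hyx, mul_assoc, mul_assoc,
        (hzx.pow_left n).eq]
  have := (hconj n).pow_right m
  rw [SemiconjBy, (hzy.symm.pow_right n).mul_pow, ← pow_mul] at this
  rw [← this, mul_assoc]

lemma pow_mul_pow_mul_pow_mul_pow (hyx : y * x = x * y * z) (hzx : Commute z x)
    (hzy : Commute z y) (a b a' b' : ℕ) :
    x ^ a * y ^ b * (x ^ a' * y ^ b') = x ^ (a + a') * y ^ (b + b') * z ^ (a' * b) := by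
  rw [pow_add, pow_add, mul_assoc (x ^ a), ← mul_assoc (y ^ b),
    pow_mul_pow_eq_of_mul_eq hyx hzx hzy, mul_assoc (x ^ a' * y ^ b), mul_assoc (x ^ a'),
    ((hzy.pow_pow _ _).eq), ← mul_assoc, ← mul_assoc, ← mul_assoc, mul_assoc (x ^ a * x ^ a')]

lemma pow_eq_pow_of_commute (hyx : y * x = x * y * z) (hzx : Commute z x) (hzy : Commute z y)
    {a b a' b' : ℕ} (h : Commute (x ^ a * y ^ b) (x ^ a' * y ^ b')) :
    z ^ (a' * b) = z ^ (a * b') := by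
  have := h.eq
  rw [pow_mul_pow_mul_pow_mul_pow hyx hzx hzy, pow_mul_pow_mul_pow_mul_pow hyx hzx hzy,
    add_comm a', add_comm b'] at this
  exact mul_left_cancel this

lemma Commute.of_mul_mul {u w n m : G} (h : Commute (u * n) (w * m)) (hnw : Commute n w)
    (hmu : Commute m u) (hnm : Commute n m) : Commute u w := by
  have e1 : u * n * (w * m) = u * w * (n * m) := by
    rw [mul_assoc, ← mul_assoc n, hnw.eq]; simp only [mul_assoc]
  have e2 : w * m * (u * n) = w * u * (n * m) := by
    rw [mul_assoc, ← mul_assoc m, hmu.eq, hnm.eq]; simp only [mul_assoc]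
  exact mul_right_cancel (e1.symm.trans (h.eq.trans e2))

lemma pow_val_natCast {M : Type*} [Monoid M] {p : ℕ} {x : M} (hx : x ^ p = 1) (n : ℕ) :
    x ^ (n : ZMod p).val = x ^ n := by
  conv_rhs => rw [← Nat.div_add_mod n p, pow_add, pow_mul, hx, one_pow, one_mul]
  rw [ZMod.val_natCast]

end Commutation

/-- The Heisenberg group mod `p`: `⟨a, b, c⟩` stands for `x₁ ^ a * x₂ ^ b * x₃ ^ c`, where
`x₂ * x₁ = x₁ * x₂ * x₃` and `x₃` is central. -/
@[ext] structure Heis (p : ℕ) where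
  a : ZMod p
  b : ZMod p
  c : ZMod p

namespace Heis

variable {p : ℕ}

instance : Mul (Heis p) := ⟨fun v w => ⟨v.a + w.a, v.b + w.b, v.c + w.c + w.a * v.b⟩⟩
instance : One (Heis p) := ⟨⟨0, 0, 0⟩⟩
instance : Inv (Heis p) := ⟨fun v => ⟨-v.a, -v.b, -v.c + v.a * v.b⟩⟩

@[simp] lemma mul_a (v w : Heis p) : (v * w).a = v.a + w.a := rfl
@[simp] lemma mul_b (v w : Heis p) : (v * w).b = v.b + w.b := rfl
@[simp] lemma mul_c (v w : Heis p) : (v * w).c = v.c + w.c + w.a * v.b := rfl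
@[simp] lemma one_a : (1 : Heis p).a = 0 := rfl
@[simp] lemma one_b : (1 : Heis p).b = 0 := rfl
@[simp] lemma one_c : (1 : Heis p).c = 0 := rfl
@[simp] lemma inv_a (v : Heis p) : v⁻¹.a = -v.a := rfl
@[simp] lemma inv_b (v : Heis p) : v⁻¹.b = -v.b := rfl
@[simp] lemma inv_c (v : Heis p) : v⁻¹.c = -v.c + v.a * v.b := rfl

instance : Group (Heis p) :=
  Group.ofLeftAxioms
    (fun _ _ _ => by ext <;> simp <;> ring)
    (fun _ => by ext <;> simp)
    (fun _ => by ext <;> simp)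

lemma commute_iff {v w : Heis p} : Commute v w ↔ w.a * v.b = v.a * w.b := by
  rw [Commute, SemiconjBy, Heis.ext_iff]
  simp only [mul_a, mul_b, mul_c, add_comm v.a, add_comm v.b, true_and]
  constructor <;> intro h <;> linear_combination h

lemma b_eq_zero_of_commute [Fact p.Prime] {v w : Heis p} (h : Commute v w) (hv : v.a ≠ 0)
    (hw : w.a = 0) : w.b = 0 := by
  have := commute_iff.mp h
  rw [hw, zero_mul] at this
  exact (mul_eq_zero.mp this.symm).resolve_left hv

lemma pow_a (v : Heis p) (n : ℕ) : (v ^ n).a = n * v.a := by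
  induction n with
  | zero => simp
  | succ n ih => rw [pow_succ, mul_a, ih]; push_cast; ring

def equivProd : Heis p ≃ ZMod p × ZMod p × ZMod p where
  toFun v := (v.a, v.b, v.c)
  invFun t := ⟨t.1, t.2.1, t.2.2⟩

instance [NeZero p] : Finite (Heis p) := .of_equiv _ equivProd.symm

lemma card : Nat.card (Heis p) = p ^ 3 := by
  rw [Nat.card_congr equivProd, Nat.card_prod, Nat.card_prod, Nat.card_zmod]; ring

def lift [NeZero p] {Q : Type*} [Group Q] {x y z : Q} (hyx : y * x = x * y * z) (hzx : Commute z x)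
    (hzy : Commute z y) (hx : x ^ p = 1) (hy : y ^ p = 1) (hz : z ^ p = 1) : Heis p →* Q where
  toFun v := x ^ v.a.val * y ^ v.b.val * z ^ v.c.val
  map_one' := by simp [show (1 : Heis p) = ⟨0, 0, 0⟩ from rfl]
  map_mul' v w := by
    have hzxy : ∀ k, Commute (z ^ k) (x ^ w.a.val * y ^ w.b.val) := fun k =>
      (hzx.pow_pow _ _).mul_right (hzy.pow_pow _ _)
    have hmul : v * w = ⟨((v.a.val + w.a.val : ℕ) : ZMod p), ((v.b.val + w.b.val : ℕ) : ZMod p),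
        ((w.a.val * v.b.val + v.c.val + w.c.val : ℕ) : ZMod p)⟩ := by
      ext <;> simp; ring
    rw [hmul, pow_val_natCast hx, pow_val_natCast hy, pow_val_natCast hz, pow_add z, pow_add z]
    calc _ = x ^ v.a.val * y ^ v.b.val * (x ^ w.a.val * y ^ w.b.val) * z ^ v.c.val
          * z ^ w.c.val := by
          rw [pow_mul_pow_mul_pow_mul_pow hyx hzx hzy]; simp only [mul_assoc]
      _ = _ := by rw [mul_assoc _ _ (z ^ v.c.val), ← (hzxy _).eq]; simp only [mul_assoc]

end Heis

section HeisCocycle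

variable {p : ℕ}

-- The cocycle of a central extension of `Heis p` by `ZMod p` in which lifts of `x₂` and `x₃` do
-- not commute.
def heisOmega (v w : Heis p) : ZMod p :=
  w.a * (v.b * (v.b - 1) * 2⁻¹) + v.c * w.b + w.a * v.b * w.b

lemma heisOmega_cocycle [Fact p.Prime] (h2 : (2 : ZMod p) ≠ 0) (u v w : Heis p) :
    heisOmega u v + heisOmega (u * v) w = heisOmega v w + heisOmega u (v * w) := by
  simp only [heisOmega, Heis.mul_a, Heis.mul_b, Heis.mul_c]
  linear_combination (w.a * u.b * v.b) * mul_inv_cancel₀ h2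

@[simp] lemma heisOmega_one_left (v : Heis p) : heisOmega 1 v = 0 := by simp [heisOmega]

@[simp] lemma heisOmega_one_right (v : Heis p) : heisOmega v 1 = 0 := by simp [heisOmega]

variable (p) in
def zmodToQZ : ZMod p →+ QZ :=
  ZMod.lift p ⟨(QuotientAddGroup.mk' _).comp (zmultiplesHom ℚ (1 / p : ℚ)), by
    rcases eq_or_ne (p : ℚ) 0 with hp | hp <;> simp [hp]⟩

lemma zmodToQZ_one_ne_zero (hp : 1 < p) : zmodToQZ p 1 ≠ 0 := by
  have h1 : zmodToQZ p 1 = ((1 / p : ℚ) : QZ) := by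
    rw [← Int.cast_one (R := ZMod p), zmodToQZ, ZMod.lift_coe]
    simp
  rw [h1]
  intro h
  obtain ⟨k, hk⟩ := AddSubgroup.mem_zmultiples_iff.mp ((QuotientAddGroup.eq_zero_iff _).mp h)
  have hp' : (1 : ℚ) < p := by exact_mod_cast hp
  rw [zsmul_one] at hk
  have hk0 : (0 : ℚ) < k := hk ▸ by positivity
  have hk1 : (k : ℚ) < 1 := hk ▸ (div_lt_one (by linarith)).mpr hp'
  norm_cast at hk0 hk1
  omega

def heisCocycle (v w : Heis p) : QZ := zmodToQZ p (heisOmega v w)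

lemma isGrpCocycle_heisCocycle [Fact p.Prime] (h2 : (2 : ZMod p) ≠ 0) :
    IsGrpCocycle (heisCocycle (p := p)) := fun u v w => by
  simp only [heisCocycle, ← map_add, heisOmega_cocycle h2]

end HeisCocycle

section Rels

open Subgroup

variable {G : Type*} [Group G] {p : ℕ} [Fact p.Prime] {f1 f2 f3 f4 f5 : G}

def IsHeisCoords (θ : G →* Heis p) (f1 f2 f3 : G) (N : Subgroup G) : Prop :=
  ∀ g, ∃ n ∈ N, g = f1 ^ (θ g).a.val * f2 ^ (θ g).b.val * f3 ^ (θ g).c.val * n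

lemma exists_mulEquiv_heis [(closure ({f4, f5} : Set G)).Normal]
    (hgen : closure {f1, f2, f3, f4, f5} = ⊤)
    (r1 : cmt f2 f1 = f3) (r2 : cmt f3 f1 = f4) (r4 : cmt f3 f2 = f5)
    (hQcard : Nat.card (G ⧸ closure ({f4, f5} : Set G)) = p ^ 3)
    (hQexp : Monoid.exponent (G ⧸ closure ({f4, f5} : Set G)) = p) :
    ∃ e : Heis p ≃* G ⧸ closure ({f4, f5} : Set G),
      ∀ v, e v = ((f1 ^ v.a.val * f2 ^ v.b.val * f3 ^ v.c.val : G) : G ⧸ closure {f4, f5}) := by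
  set N := closure ({f4, f5} : Set G)
  have h4 : (f4 : G ⧸ N) = 1 := (QuotientGroup.eq_one_iff _).mpr (subset_closure (by simp))
  have h5 : (f5 : G ⧸ N) = 1 := (QuotientGroup.eq_one_iff _).mpr (subset_closure (by simp))
  have hexp : ∀ q : G ⧸ N, q ^ p = 1 := hQexp ▸ Monoid.pow_exponent_eq_one
  have hyx : (f2 : G ⧸ N) * f1 = f1 * f2 * f3 := by
    rw [← QuotientGroup.mk_mul, mul_eq_mul_mul_of_cmt_eq r1]; rfl
  have hzx : Commute (f3 : G ⧸ N) f1 := by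
    rw [Commute, SemiconjBy, ← QuotientGroup.mk_mul, mul_eq_mul_mul_of_cmt_eq r2,
      QuotientGroup.mk_mul, h4, mul_one]; rfl
  have hzy : Commute (f3 : G ⧸ N) f2 := by
    rw [Commute, SemiconjBy, ← QuotientGroup.mk_mul, mul_eq_mul_mul_of_cmt_eq r4,
      QuotientGroup.mk_mul, h5, mul_one]; rfl
  let ρ := Heis.lift hyx hzx hzy (hexp _) (hexp _) (hexp _)
  have hρ : ∀ v, ρ v = ((f1 ^ v.a.val * f2 ^ v.b.val * f3 ^ v.c.val : G) : G ⧸ N) := fun v => by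
    simp [ρ, Heis.lift]
  have hsurj : Function.Surjective ρ := by
    have : closure {f1, f2, f3, f4, f5} ≤ ρ.range.comap (QuotientGroup.mk' N) := by
      rw [closure_le]
      rintro s (rfl | rfl | rfl | rfl | rfl)
      · exact ⟨⟨1, 0, 0⟩, by simp [hρ, ZMod.val_one]⟩
      · exact ⟨⟨0, 1, 0⟩, by simp [hρ, ZMod.val_one]⟩
      · exact ⟨⟨0, 0, 1⟩, by simp [hρ, ZMod.val_one]⟩
      · exact ⟨1, by simp [h4]⟩
      · exact ⟨1, by simp [h5]⟩
    rintro ⟨g⟩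
    exact this (hgen ▸ mem_top g)
  exact ⟨MulEquiv.ofBijective ρ
    ((Nat.bijective_iff_surjective_and_card ρ).mpr ⟨hsurj, by rw [Heis.card, hQcard]⟩), hρ⟩

lemma exists_isHeisCoords [(closure ({f4, f5} : Set G)).Normal]
    (hgen : closure {f1, f2, f3, f4, f5} = ⊤)
    (r1 : cmt f2 f1 = f3) (r2 : cmt f3 f1 = f4) (r4 : cmt f3 f2 = f5)
    (hQcard : Nat.card (G ⧸ closure ({f4, f5} : Set G)) = p ^ 3)
    (hQexp : Monoid.exponent (G ⧸ closure ({f4, f5} : Set G)) = p) :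
    ∃ θ : G →* Heis p, IsHeisCoords θ f1 f2 f3 (closure {f4, f5}) ∧
      θ f2 = ⟨0, 1, 0⟩ ∧ θ f3 = ⟨0, 0, 1⟩ ∧ θ f4 = 1 ∧ θ f5 = 1 := by
  obtain ⟨e, he⟩ := exists_mulEquiv_heis hgen r1 r2 r4 hQcard hQexp
  refine ⟨e.symm.toMonoidHom.comp (QuotientGroup.mk' _), fun g => ?_, ?_, ?_, ?_, ?_⟩
  · set w := f1 ^ (e.symm g).a.val * f2 ^ (e.symm g).b.val * f3 ^ (e.symm g).c.val
    have hw : (w : G ⧸ closure ({f4, f5} : Set G)) = g := (he _).symm.trans (e.apply_symm_apply _)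
    exact ⟨w⁻¹ * g, QuotientGroup.eq.mp hw, (mul_inv_cancel_left w g).symm⟩
  · exact e.symm_apply_eq.mpr (by simp [he, ZMod.val_one])
  · exact e.symm_apply_eq.mpr (by simp [he, ZMod.val_one])
  · change e.symm (f4 : G ⧸ closure ({f4, f5} : Set G)) = 1
    rw [(QuotientGroup.eq_one_iff f4).mpr (subset_closure (by simp)), map_one]
  · change e.symm (f5 : G ⧸ closure ({f4, f5} : Set G)) = 1
    rw [(QuotientGroup.eq_one_iff f5).mpr (subset_closure (by simp)), map_one]

lemma f5_ne_one (h4p : f4 ^ p = 1)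
    (hN : Nonempty (closure ({f4, f5} : Set G) ≃*
      Multiplicative (ZMod p) × Multiplicative (ZMod p))) :
    f5 ≠ 1 := by
  rintro rfl
  obtain ⟨e⟩ := hN
  have hcard := Nat.card_congr e.toEquiv
  rw [Set.pair_comm, closure_insert_one, ← zpowers_eq_closure, Nat.card_zpowers, Nat.card_prod]
    at hcard
  simp only [Nat.card_eq_fintype_card, Fintype.card_multiplicative, ZMod.card] at hcard
  have hp := (Fact.out : p.Prime)
  have := orderOf_le_of_pow_eq_one hp.pos h4p
  nlinarith [hp.two_le]

lemma closure_le_centralizer_of_rels (r5 : cmt f4 f2 = 1) (r6 : cmt f4 f3 = 1)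
    (h5c : f5 ∈ center G) : closure ({f4, f5} : Set G) ≤ centralizer {f2, f3, f4, f5} := by
  rw [closure_le]
  rintro _ (rfl | rfl)
  · rintro _ (rfl | rfl | rfl | rfl)
    · simpa using (mul_eq_mul_mul_of_cmt_eq r5).symm
    · simpa using (mul_eq_mul_mul_of_cmt_eq r6).symm
    · rfl
    · exact (mem_center_iff.mp h5c _).symm
  · exact center_le_centralizer _ h5c

lemma cmt_eq_one_of_mem_center {x : G} (hx : x ∈ center G) (y : G) : cmt x y = 1 := by
  rw [cmt, mul_assoc _ x, ← mem_center_iff.mp hx]; group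

lemma natCast_eq_zero_of_pow_mem_center (h4p : f4 ^ p = 1) (r3 : cmt f4 f1 = f5) (h5 : f5 ≠ 1)
    {k : ℕ} (hk : f4 ^ k ∈ center G) : (k : ZMod p) = 0 := by
  by_contra hk0
  have hf4 : f4 ∈ center G := by
    have : f4 ^ (k * ((k : ZMod p)⁻¹).val) = f4 := by
      rw [← pow_val_natCast h4p]
      push_cast [ZMod.natCast_zmod_val]
      rw [mul_inv_cancel₀ hk0, ZMod.val_one, pow_one]
    exact this ▸ pow_mul f4 _ _ ▸ pow_mem hk _
  exact h5 (r3 ▸ cmt_eq_one_of_mem_center hf4 f1)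

lemma closure_le_comap_center (hgen : closure {f1, f2, f3, f4, f5} = ⊤) (r3 : cmt f4 f1 = f5)
    (r5 : cmt f4 f2 = 1) (r6 : cmt f4 f3 = 1) (h5c : f5 ∈ center G) :
    closure ({f4, f5} : Set G) ≤ (center (G ⧸ center G)).comap (QuotientGroup.mk' (center G)) := by
  let q := QuotientGroup.mk' (center G)
  have h5 : q f5 = 1 := (QuotientGroup.eq_one_iff _).mpr h5c
  have hcomm : ∀ x : G, cmt f4 x ∈ center G → x ∈ (centralizer {q f4}).comap q := fun x hx => by
    have := congrArg q (mul_eq_mul_mul_of_cmt_eq (rfl : cmt f4 x = _))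
    rw [map_mul, map_mul, map_mul, QuotientGroup.mk'_apply _ (cmt f4 x),
      (QuotientGroup.eq_one_iff _).mpr hx, mul_one] at this
    exact mem_centralizer_singleton_iff.mpr this.symm
  have hle : closure {f1, f2, f3, f4, f5} ≤ (centralizer {q f4}).comap q := by
    rw [closure_le]
    rintro s (rfl | rfl | rfl | rfl | rfl)
    · exact hcomm _ (r3 ▸ h5c)
    · exact hcomm _ (r5 ▸ one_mem _)
    · exact hcomm _ (r6 ▸ one_mem _)
    · exact hcomm _ (by simp [cmt])
    · rw [SetLike.mem_coe, mem_comap, h5]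
      exact one_mem _
  have h4 : q f4 ∈ center (G ⧸ center G) := by
    rw [mem_center_iff]
    intro y
    obtain ⟨g, rfl⟩ := QuotientGroup.mk_surjective y
    exact mem_centralizer_singleton_iff.mp (hle (hgen ▸ mem_top g))
  rw [closure_le]
  rintro _ (rfl | rfl)
  · exact h4
  · rw [SetLike.mem_coe, mem_comap, h5]
    exact one_mem _

lemma heisOmega_comm_of_a_eq_zero {θ : G →* Heis p}
    (hθ : IsHeisCoords θ f1 f2 f3 (closure {f4, f5}))
    (hcent : closure ({f4, f5} : Set G) ≤ centralizer {f2, f3, f4, f5})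
    (r4 : cmt f3 f2 = f5) (h5c : f5 ∈ center G) (h5 : orderOf f5 = p)
    {g h : G} (hgh : Commute g h) (hg : (θ g).a = 0) (hh : (θ h).a = 0) :
    heisOmega (θ g) (θ h) = heisOmega (θ h) (θ g) := by
  obtain ⟨n, hn, hgn⟩ := hθ g
  obtain ⟨m, hm, hhm⟩ := hθ h
  rw [hg, ZMod.val_zero, pow_zero, one_mul] at hgn
  rw [hh, ZMod.val_zero, pow_zero, one_mul] at hhm
  have hS : closure ({f4, f5} : Set G) ≤ closure {f2, f3, f4, f5} :=
    closure_mono (by rintro x (rfl | rfl) <;> simp)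
  have hcomm : ∀ n ∈ closure ({f4, f5} : Set G), ∀ x ∈ closure ({f2, f3, f4, f5} : Set G),
      Commute n x := fun n hn x hx =>
    (mem_centralizer_iff.mp ((centralizer_closure ({f2, f3, f4, f5} : Set G)).symm ▸ hcent hn)
      x hx).symm
  have hmem : ∀ b c : ℕ, f2 ^ b * f3 ^ c ∈ closure ({f2, f3, f4, f5} : Set G) := fun b c =>
    mul_mem (pow_mem (subset_closure (by simp)) b) (pow_mem (subset_closure (by simp)) c)
  rw [hgn, hhm] at hgh
  have hf5 := pow_eq_pow_of_commute (mul_eq_mul_mul_of_cmt_eq r4) (mem_center_iff.mp h5c f2).symm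
    (mem_center_iff.mp h5c f3).symm
    (hgh.of_mul_mul (hcomm n hn _ (hmem _ _)) (hcomm m hm _ (hmem _ _)) (hcomm n hn m (hS hm)))
  rw [pow_eq_pow_iff_modEq, h5, ← ZMod.natCast_eq_natCast_iff] at hf5
  push_cast [ZMod.natCast_zmod_val] at hf5
  simp only [heisOmega, hg, hh]
  linear_combination hf5

lemma eq_one_of_commute_of_a_ne_zero {θ : G →* Heis p}
    (hθ : IsHeisCoords θ f1 f2 f3 (closure {f4, f5}))
    (hNZ : closure ({f4, f5} : Set G) ≤
      (center (G ⧸ center G)).comap (QuotientGroup.mk' (center G)))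
    (r2 : cmt f3 f1 = f4) (r4 : cmt f3 f2 = f5) (h5c : f5 ∈ center G)
    (hf4 : ∀ k : ℕ, f4 ^ k ∈ center G → (k : ZMod p) = 0)
    {g h : G} (hgh : Commute g h) (hg : (θ g).a ≠ 0) (hh : (θ h).a = 0) : θ h = 1 := by
  have hb := Heis.b_eq_zero_of_commute (hgh.map θ) hg hh
  suffices hc : (θ h).c = 0 from Heis.ext hh hb hc
  let q := QuotientGroup.mk' (center G)
  have hq : ∀ n ∈ closure ({f4, f5} : Set G), ∀ x, Commute x (q n) := fun n hn =>
    mem_center_iff.mp (hNZ hn)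
  have h4 : ∀ x, Commute (q f4) x := fun x => (hq f4 (subset_closure (by simp)) x).symm
  have h31 := congrArg q (mul_eq_mul_mul_of_cmt_eq r2)
  rw [map_mul, map_mul, map_mul] at h31
  have h23 : Commute (q f2) (q f3) := by
    have := congrArg q (mul_eq_mul_mul_of_cmt_eq r4)
    rw [map_mul, map_mul, map_mul, QuotientGroup.mk'_apply _ f5,
      (QuotientGroup.eq_one_iff _).mpr h5c, mul_one] at this
    exact this.symm
  obtain ⟨n, hn, hgn⟩ := hθ g
  obtain ⟨m, hm, hhm⟩ := hθ h
  rw [hh, hb, ZMod.val_zero, pow_zero, pow_zero, one_mul, one_mul] at hhm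
  set A := (θ g).a.val
  set c := (θ h).c.val
  have hR : Commute (q (f2 ^ (θ g).b.val * f3 ^ (θ g).c.val * n)) (q (f3 ^ c)) := by
    rw [map_mul, map_mul, map_pow, map_pow, map_pow]
    exact ((h23.pow_pow _ _).mul_left ((Commute.refl _).pow_pow _ _)).mul_left (hq n hn _).symm
  have hgh' := hgh.map q
  rw [hgn, hhm, mul_assoc (f1 ^ A * _), mul_assoc (f1 ^ A), ← mul_assoc (f2 ^ _), map_mul,
    map_mul q (f3 ^ c)] at hgh'
  have h13 := hgh'.of_mul_mul hR (hq m hm _).symm (hq m hm _)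
  have hz := pow_eq_pow_of_commute h31 (h4 _) (h4 _) (a := A) (b := 0) (a' := 0) (b' := c)
    (by simpa using h13)
  rw [zero_mul, pow_zero, ← map_pow, eq_comm, QuotientGroup.mk'_apply,
    QuotientGroup.eq_one_iff] at hz
  have := hf4 _ hz
  push_cast [A, c, ZMod.natCast_zmod_val] at this
  exact (mul_eq_zero.mp this).resolve_left hg

lemma exists_pow_eq_of_commute {θ : G →* Heis p}
    (hθ : IsHeisCoords θ f1 f2 f3 (closure {f4, f5}))
    (hNZ : closure ({f4, f5} : Set G) ≤
      (center (G ⧸ center G)).comap (QuotientGroup.mk' (center G)))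
    (r2 : cmt f3 f1 = f4) (r4 : cmt f3 f2 = f5) (h5c : f5 ∈ center G)
    (hf4 : ∀ k : ℕ, f4 ^ k ∈ center G → (k : ZMod p) = 0)
    {g h : G} (hgh : Commute g h) (hg : (θ g).a ≠ 0) : ∃ k : ℕ, θ h = θ g ^ k := by
  set k := ((θ g).a⁻¹ * (θ h).a).val
  have hgk : Commute g (h * (g ^ k)⁻¹) := hgh.mul_right ((Commute.refl g).pow_right k).inv_right
  have hak : (θ (h * (g ^ k)⁻¹)).a = 0 := by
    rw [map_mul, map_inv, map_pow, Heis.mul_a, Heis.inv_a, Heis.pow_a, ZMod.natCast_zmod_val,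
      mul_comm _ (θ h).a, mul_assoc, inv_mul_cancel₀ hg, mul_one, add_neg_cancel]
  have := eq_one_of_commute_of_a_ne_zero hθ hNZ r2 r4 h5c hf4 hgk hg hak
  exact ⟨k, by rwa [map_mul, map_inv, map_pow, mul_inv_eq_one] at this⟩

lemma heisCocycle_comm_of_commute {θ : G →* Heis p} (h2 : (2 : ZMod p) ≠ 0)
    (hθ : IsHeisCoords θ f1 f2 f3 (closure {f4, f5}))
    (hcent : closure ({f4, f5} : Set G) ≤ centralizer {f2, f3, f4, f5})
    (hNZ : closure ({f4, f5} : Set G) ≤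
      (center (G ⧸ center G)).comap (QuotientGroup.mk' (center G)))
    (r2 : cmt f3 f1 = f4) (r4 : cmt f3 f2 = f5) (h5c : f5 ∈ center G) (h5 : orderOf f5 = p)
    (hf4 : ∀ k : ℕ, f4 ^ k ∈ center G → (k : ZMod p) = 0)
    {g h : G} (hgh : Commute g h) : heisCocycle (θ g) (θ h) = heisCocycle (θ h) (θ g) := by
  have hpow : ∀ {g h : G}, Commute g h → (θ g).a ≠ 0 →
      heisCocycle (θ g) (θ h) = heisCocycle (θ h) (θ g) := fun hgh hg => by
    obtain ⟨k, hk⟩ := exists_pow_eq_of_commute hθ hNZ r2 r4 h5c hf4 hgh hg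
    rw [hk]
    exact (isGrpCocycle_heisCocycle h2).apply_pow_comm _ k
  by_cases hg : (θ g).a = 0
  · by_cases hh : (θ h).a = 0
    · rw [heisCocycle, heisOmega_comm_of_a_eq_zero hθ hcent r4 h5c h5 hgh hg hh, heisCocycle]
    · exact (hpow hgh.symm hh).symm
  · exact hpow hgh hg

end Rels

theorem B0_ne_bot_of_rels_general (p : ℕ) (hp : p.Prime) (hp3 : 3 ≤ p)
    (G : Type) [Group G]
    (f1 f2 f3 f4 f5 : G)
    (hgen : Subgroup.closure {f1, f2, f3, f4, f5} = ⊤)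
    (h4p : f4 ^ p = 1) (h5p : f5 ^ p = 1) (h5c : f5 ∈ Subgroup.center G)
    (r1 : cmt f2 f1 = f3) (r2 : cmt f3 f1 = f4) (r3 : cmt f4 f1 = f5)
    (r4 : cmt f3 f2 = f5) (r5 : cmt f4 f2 = 1) (r6 : cmt f4 f3 = 1)
    (hN : Nonempty (↥(Subgroup.closure {f4, f5})
            ≃* Multiplicative (ZMod p) × Multiplicative (ZMod p)))
    [hNnormal : (Subgroup.closure ({f4, f5} : Set G)).Normal]
    (hQcard : Nat.card (G ⧸ Subgroup.closure ({f4, f5} : Set G)) = p ^ 3)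
    (hQexp : Monoid.exponent (G ⧸ Subgroup.closure ({f4, f5} : Set G)) = p) :
    B0 G ≠ ⊥ := by
  have := Fact.mk hp
  have h2 : (2 : ZMod p) ≠ 0 := by
    intro h
    have := Nat.le_of_dvd two_pos ((ZMod.natCast_eq_zero_iff 2 p).mp (by exact_mod_cast h))
    omega
  have h5 : f5 ≠ 1 := f5_ne_one h4p hN
  obtain ⟨θ, hθ, hθ2, hθ3, hθ4, hθ5⟩ := exists_isHeisCoords hgen r1 r2 r4 hQcard hQexp
  have hF := (isGrpCocycle_heisCocycle h2).comp θ
  have hsymm : ∀ g h, Commute g h → heisCocycle (θ g) (θ h) = heisCocycle (θ h) (θ g) :=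
    fun _ _ => heisCocycle_comm_of_commute h2 hθ (closure_le_centralizer_of_rels r5 r6 h5c)
      (closure_le_comap_center hgen r3 r5 r6 h5c) r2 r4 h5c (orderOf_eq_prime h5p h5)
      (fun _ => natCast_eq_zero_of_pow_mem_center h4p r3 h5)
  refine B0_ne_bot_of_not_isGrpCoboundary hF (restrictsToCoboundaries_of_symm hF hsymm)
    fun hcob => ?_
  have h32 : cmtForm (fun g h => heisCocycle (θ g) (θ h)) f3 f2 = -zmodToQZ p 1 := by
    simp [cmtForm, r4, hθ2, hθ3, hθ5, heisCocycle, heisOmega]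
  have h41 : cmtForm (fun g h => heisCocycle (θ g) (θ h)) f4 f1 = 0 := by
    simp [cmtForm, r3, hθ4, hθ5, heisCocycle]
  have := hcob.cmtForm_eq_of_cmt_eq (r4.trans r3.symm)
  exact zmodToQZ_one_ne_zero hp.one_lt (neg_eq_zero.mp (h32.symm.trans (this.trans h41)))

/-- Let `p ≥ 3` be a prime and `G` a group of order `p⁵` generated by `f1,…,f5` with
(i) `f4^p = f5^p = 1` and `f5` central, (ii) `[f2,f1] = f3`, `[f3,f1] = f4`,
`[f4,f1] = [f3,f2] = f5`, `[f4,f2] = [f4,f3] = 1`, and (iii) `⟨f4,f5⟩ ≃ C_p × C_p` and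
`G/⟨f4,f5⟩` non-abelian of order `p³` and exponent `p`. Then `B₀(G) ≠ 0`. -/
theorem B0_ne_bot_of_rels (p : ℕ) (hp : p.Prime) (hp3 : 3 ≤ p)
    (G : Type) [Group G] [Finite G] (hcard : Nat.card G = p ^ 5)
    (f1 f2 f3 f4 f5 : G)
    (hgen : Subgroup.closure {f1, f2, f3, f4, f5} = ⊤)
    (h4p : f4 ^ p = 1) (h5p : f5 ^ p = 1) (h5c : f5 ∈ Subgroup.center G)
    (r1 : cmt f2 f1 = f3) (r2 : cmt f3 f1 = f4) (r3 : cmt f4 f1 = f5)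
    (r4 : cmt f3 f2 = f5) (r5 : cmt f4 f2 = 1) (r6 : cmt f4 f3 = 1)
    (hN : Nonempty (↥(Subgroup.closure {f4, f5})
            ≃* Multiplicative (ZMod p) × Multiplicative (ZMod p)))
    [hNnormal : (Subgroup.closure ({f4, f5} : Set G)).Normal]
    (hQcard : Nat.card (G ⧸ Subgroup.closure ({f4, f5} : Set G)) = p ^ 3)
    (hQnonab : ∃ a b : G ⧸ Subgroup.closure ({f4, f5} : Set G), a * b ≠ b * a)
    (hQexp : Monoid.exponent (G ⧸ Subgroup.closure ({f4, f5} : Set G)) = p) :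
    B0 G ≠ ⊥ :=
  B0_ne_bot_of_rels_general p hp hp3 G f1 f2 f3 f4 f5 hgen h4p h5p h5c r1 r2 r3 r4 r5 r6 hN
    (hNnormal := hNnormal) hQcard hQexp
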